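/- arXiv:2010.13932 — 4 statements merged into one kernel-verified Lean document; each statement's English description precedes it below -/
import Mathlib

section
/- Let (s_n)_{n≥1} be a sequence of natural numbers with s_n → ∞, and set s_0 := liminf_{n→∞} log(s_1⋯s_n) / (2 log(s_1⋯s_n) + log s_{n+1}). Then for every 0 < s < s_0 and every integer N ≥ 2 there exists n_0 such that for all n ≥ n_0: (s_{n+1} · (∏_{k=1}^n N s_k)^2)^s ≤ ∏_{k=1}^n (N−1) s_k. -/
/-!
Write `L n = log (s 1 ⋯ s n)` and `a n = log s (n + 1)`. Taking logarithms, the claim reads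
`t (2 L n + a n) + 2 t n log N ≤ L n + n log (N - 1)`. For `t < t' < s0` we eventually have
`t' (2 L n + a n) < L n`, so the first term is at most `(t / t') L n`; since `s n → ∞`, `L n`
eventually exceeds every multiple of `n`, so the remaining `(1 - t / t') L n` absorbs
`2 t n log N`.
-/

open Filter Real Finset

theorem eventually_mul_le_sum_Icc {u : ℕ → ℝ} (hu0 : ∀ k, 0 ≤ u k)
    (hu : Tendsto u atTop atTop) (c : ℝ) :
    ∀ᶠ n in atTop, c * n ≤ ∑ k ∈ Icc 1 n, u k := by
  set c' := max c 0
  obtain ⟨K, hK⟩ := eventually_atTop.mp (hu.eventually_ge_atTop (2 * c') |>.and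
    (eventually_ge_atTop 1))
  filter_upwards [eventually_ge_atTop (2 * K)] with n hn
  have hcard : (n : ℝ) ≤ 2 * #(Icc K n) := by
    rw [Nat.card_Icc]; exact_mod_cast (by omega : n ≤ 2 * (n + 1 - K))
  calc c * n ≤ c' * n := by gcongr; exact le_max_left c 0
    _ ≤ ∑ _k ∈ Icc K n, 2 * c' := by
        rw [sum_const, nsmul_eq_mul]; nlinarith [le_max_right c 0]
    _ ≤ ∑ k ∈ Icc K n, u k := sum_le_sum fun k hk => (hK k (mem_Icc.mp hk).1).1
    _ ≤ ∑ k ∈ Icc 1 n, u k :=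
        sum_le_sum_of_subset_of_nonneg (Icc_subset_Icc (hK K le_rfl).2 le_rfl)
          fun k _ _ => hu0 k

theorem eventually_mul_le_log_prod {x : ℕ → ℝ} (hx : ∀ k, 1 ≤ x k)
    (hx_tendsto : Tendsto x atTop atTop) (c : ℝ) :
    ∀ᶠ n in atTop, c * n ≤ log (∏ k ∈ Icc 1 n, x k) := by
  simp_rw [log_prod fun k _ => (zero_lt_one.trans_le (hx k)).ne']
  exact eventually_mul_le_sum_Icc (fun k => log_nonneg (hx k))
    (tendsto_log_atTop.comp hx_tendsto) c

theorem eventually_mul_add_mul_le_of_lt_liminf {L a : ℕ → ℝ} (hL : ∀ n, 0 ≤ L n)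
    (ha : ∀ n, 0 ≤ a n) (hgrowth : ∀ c, ∀ᶠ n in atTop, c * n ≤ L n) {t : ℝ} (ht : 0 < t)
    (hlt : t < liminf (fun n => L n / (2 * L n + a n)) atTop) (c : ℝ) :
    ∀ᶠ n in atTop, t * (2 * L n + a n) + c * n ≤ L n := by
  obtain ⟨t', htt', ht'lt⟩ := exists_between hlt
  have ht' : 0 < t' := ht.trans htt'
  have hε : 0 < 1 - t / t' := by rw [sub_pos, div_lt_one ht']; exact htt'
  have hratio : ∀ᶠ n in atTop, t' < L n / (2 * L n + a n) :=
    eventually_lt_of_lt_liminf ht'lt (isBoundedUnder_of ⟨0, fun n =>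
      div_nonneg (hL n) (by linarith [hL n, ha n])⟩)
  filter_upwards [hratio, hgrowth (c / (1 - t / t'))] with n hn hcn
  have hD : 0 < 2 * L n + a n := by
    refine (add_nonneg (mul_nonneg zero_le_two (hL n)) (ha n)).lt_of_ne' fun h => ?_
    rw [h, div_zero] at hn
    exact ht'.not_gt hn
  have h1 : t * (2 * L n + a n) ≤ t / t' * L n :=
    calc t * (2 * L n + a n) = t / t' * (t' * (2 * L n + a n)) := by field_simp
      _ ≤ t / t' * L n := by gcongr; exact ((lt_div_iff₀ hD).mp hn).le
  have h2 : c * n ≤ (1 - t / t') * L n :=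
    calc c * n = (1 - t / t') * (c / (1 - t / t') * n) := by
          rw [← mul_assoc, mul_div_cancel₀ c hε.ne']
      _ ≤ (1 - t / t') * L n := by gcongr
  linarith

theorem log_prod_const_mul {ι : Type*} (s : Finset ι) {c : ℝ} (hc : 0 < c) {x : ι → ℝ}
    (hx : ∀ i ∈ s, 0 < x i) :
    log (∏ i ∈ s, c * x i) = #s * log c + log (∏ i ∈ s, x i) := by
  rw [prod_mul_distrib, prod_const, log_mul (by positivity) (prod_pos hx).ne', log_pow]

/-- With s0 the liminf of log(s_1⋯s_n)/(2 log(s_1⋯s_n) + log s_{n+1}),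
for every 0 < s < s0 and integer N ≥ 2 there is n₀ such that for all n ≥ n₀,
(s_{n+1} (∏_{k=1}^n N s_k)²)^s ≤ ∏_{k=1}^n (N−1) s_k. -/
theorem exists_n0_rpow_le (s : ℕ → ℕ) (hpos : ∀ n, 1 ≤ s n)
    (hs : Tendsto s atTop atTop) (s0 : ℝ)
    (hs0 : s0 = liminf (fun n : ℕ =>
      Real.log (∏ k ∈ Finset.Icc 1 n, (s k : ℝ)) /
        (2 * Real.log (∏ k ∈ Finset.Icc 1 n, (s k : ℝ)) + Real.log (s (n + 1))))
      atTop) :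
    ∀ t : ℝ, 0 < t → t < s0 → ∀ N : ℕ, 2 ≤ N →
      ∃ n₀ : ℕ, ∀ n ≥ n₀,
        ((s (n + 1) : ℝ) * (∏ k ∈ Finset.Icc 1 n, ((N : ℝ) * s k)) ^ 2) ^ t
          ≤ ∏ k ∈ Finset.Icc 1 n, (((N : ℝ) - 1) * s k) := by
  intro t ht hts0 N hN
  have hs1 : ∀ k, (1 : ℝ) ≤ s k := fun k => by exact_mod_cast hpos k
  have hspos : ∀ k, (0 : ℝ) < s k := fun k => zero_lt_one.trans_le (hs1 k)
  have hN1 : (1 : ℝ) ≤ N - 1 := by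
    have : (2 : ℝ) ≤ N := by exact_mod_cast hN
    linarith
  obtain ⟨n₀, hn₀⟩ := (eventually_mul_add_mul_le_of_lt_liminf
    (fun n => log_nonneg (one_le_prod fun k _ => hs1 k)) (fun n => log_nonneg (hs1 (n + 1)))
    (eventually_mul_le_log_prod hs1 (tendsto_natCast_atTop_atTop.comp hs)) ht (hs0 ▸ hts0)
    (2 * t * log N)).exists_forall_of_atTop
  refine ⟨n₀, fun n hn => ?_⟩
  have hNs : ∀ k ∈ Icc 1 n, (0 : ℝ) < N * s k := fun k _ => mul_pos (by linarith) (hspos k)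
  rw [rpow_le_iff_le_log (mul_pos (hspos _) (pow_pos (prod_pos hNs) 2))
      (prod_pos fun k _ => mul_pos (by linarith) (hspos k)),
    log_mul (hspos _).ne' (pow_pos (prod_pos hNs) 2).ne', log_pow,
    log_prod_const_mul _ (by linarith) fun k _ => hspos k,
    log_prod_const_mul _ (by linarith) fun k _ => hspos k,
    Nat.card_Icc, Nat.add_sub_cancel, Nat.cast_ofNat]
  linarith [hn₀ n hn, mul_nonneg n.cast_nonneg (log_nonneg hN1)]
end

section
/- Let λ > 1, and let c, d ≥ 2 be integers. Suppose x ∈ (0,1] has Lüroth digits (a_n) satisfying c^{λ^n} ≤ a_n < d·c^{λ^n} for all n ≥ 1. Then log Q_n / log a_{n+1} → (λ+1)/(λ(λ−1)) as n → ∞, where Q_n = a_1(a_1−1)⋯a_{n−1}(a_{n−1}−1)a_n is the n-th Lüroth continuant. -/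
open Filter

/-- The n-th Lüroth continuant of a digit sequence `a` (1-indexed):
Q_n = a_1(a_1−1)⋯a_{n−1}(a_{n−1}−1)a_n. -/
def lurothQ (a : ℕ → ℕ) (n : ℕ) : ℕ :=
  (∏ j ∈ Finset.Ico 1 n, a j * (a j - 1)) * a n

/-- If x ∈ (0,1] has Lüroth digits (a_n) with c^{λ^n} ≤ a_n < d·c^{λ^n}
for all n ≥ 1, where λ > 1 and c, d ≥ 2, then log Q_n / log a_{n+1} → (λ+1)/(λ(λ−1)). -/
theorem log_Q_div_log_a_tendsto (lam : ℝ) (hlam : 1 < lam) (c d : ℕ)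
    (hc : 2 ≤ c) (hd : 2 ≤ d) (x : ℝ) (hx : x ∈ Set.Ioc (0 : ℝ) 1)
    (a : ℕ → ℕ) (ha2 : ∀ n, 1 ≤ n → 2 ≤ a n)
    (hser : x = ∑' k : ℕ, 1 / (lurothQ a (k + 1) : ℝ))
    (hlow : ∀ n, 1 ≤ n → (c : ℝ) ^ (lam ^ n) ≤ (a n : ℝ))
    (hhigh : ∀ n, 1 ≤ n → (a n : ℝ) < (d : ℝ) * (c : ℝ) ^ (lam ^ n)) :
    Tendsto (fun n : ℕ => Real.log (lurothQ a n) / Real.log (a (n + 1)))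
      atTop (nhds ((lam + 1) / (lam * (lam - 1)))) := by
  have hlam0 : (0:ℝ) < lam := lt_trans one_pos hlam
  have hlam1 : lam - 1 ≠ 0 := sub_ne_zero.mpr (ne_of_gt hlam)
  have hlamne : lam ≠ 1 := ne_of_gt hlam
  have hc1 : (1:ℝ) < (c:ℝ) := by exact_mod_cast lt_of_lt_of_le one_lt_two (by exact_mod_cast hc)
  have hc0 : (0:ℝ) < (c:ℝ) := lt_trans one_pos hc1
  set Lc := Real.log c with hLcdef
  have hLc : 0 < Lc := Real.log_pos hc1
  have hd0 : (0:ℝ) ≤ Real.log d := Real.log_nonneg (by exact_mod_cast le_trans (by norm_num) hd)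
  have hpow : ∀ n : ℕ, (0:ℝ) < lam ^ n := fun n => pow_pos hlam0 n
  -- bounds on log (a n)
  have hlog_low : ∀ n, 1 ≤ n → lam ^ n * Lc ≤ Real.log (a n) := by
    intro n hn
    have h1 : Real.log ((c:ℝ) ^ (lam ^ n)) ≤ Real.log (a n) :=
      Real.log_le_log (Real.rpow_pos_of_pos hc0 _) (hlow n hn)
    rwa [Real.log_rpow hc0] at h1
  have hlog_high : ∀ n, 1 ≤ n → Real.log (a n) ≤ lam ^ n * Lc + Real.log d := by
    intro n hn
    have ha0 : (0:ℝ) < (a n : ℝ) := by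
      have := ha2 n hn
      exact_mod_cast lt_of_lt_of_le (by norm_num) this
    have h1 : Real.log (a n) ≤ Real.log ((d:ℝ) * (c:ℝ) ^ (lam ^ n)) :=
      Real.log_le_log ha0 (le_of_lt (hhigh n hn))
    have hd0' : (0:ℝ) < (d:ℝ) := by
      have : (0:ℕ) < d := lt_of_lt_of_le (by norm_num) hd
      exact_mod_cast this
    rw [Real.log_mul (ne_of_gt hd0') (ne_of_gt (Real.rpow_pos_of_pos hc0 _)),
      Real.log_rpow hc0] at h1
    linarith
  -- bounds on log (a n - 1)
  have hlog1_low : ∀ n, 1 ≤ n → lam ^ n * Lc - Real.log 2 ≤ Real.log ((a n : ℝ) - 1) := by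
    intro n hn
    have h2 : (2:ℝ) ≤ (a n : ℝ) := by exact_mod_cast ha2 n hn
    have h3 : Real.log ((a n : ℝ) / 2) ≤ Real.log ((a n : ℝ) - 1) :=
      Real.log_le_log (by linarith) (by linarith)
    rw [Real.log_div (by linarith) (by norm_num)] at h3
    have := hlog_low n hn
    linarith
  have hlog1_high : ∀ n, 1 ≤ n → Real.log ((a n : ℝ) - 1) ≤ lam ^ n * Lc + Real.log d := by
    intro n hn
    have h2 : (2:ℝ) ≤ (a n : ℝ) := by exact_mod_cast ha2 n hn
    have h3 : Real.log ((a n : ℝ) - 1) ≤ Real.log (a n) :=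
      Real.log_le_log (by linarith) (by linarith)
    have := hlog_high n hn
    linarith
  -- log of the continuant
  have hQlog : ∀ n, 1 ≤ n → Real.log (lurothQ a n) =
      (∑ j ∈ Finset.Ico 1 n, (Real.log (a j) + Real.log ((a j : ℝ) - 1))) + Real.log (a n) := by
    intro n hn
    have hposA : ∀ j, 1 ≤ j → (0:ℝ) < (a j : ℝ) := by
      intro j hj
      have := ha2 j hj
      exact_mod_cast lt_of_lt_of_le (by norm_num) this
    have hposB : ∀ j, 1 ≤ j → (0:ℝ) < (a j : ℝ) - 1 := by
      intro j hj
      have : (2:ℝ) ≤ (a j : ℝ) := by exact_mod_cast ha2 j hj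
      linarith
    have hcast : ((lurothQ a n : ℕ) : ℝ) =
        (∏ j ∈ Finset.Ico 1 n, (a j : ℝ) * ((a j : ℝ) - 1)) * (a n : ℝ) := by
      rw [lurothQ, Nat.cast_mul, Nat.cast_prod]
      congr 1
      refine Finset.prod_congr rfl fun j hj => ?_
      have hj1 : 1 ≤ j := (Finset.mem_Ico.mp hj).1
      have : 1 ≤ a j := le_trans (by norm_num) (ha2 j hj1)
      rw [Nat.cast_mul, Nat.cast_sub this, Nat.cast_one]
    rw [hcast, Real.log_mul, Real.log_prod]
    · congr 1
      refine Finset.sum_congr rfl fun j hj => ?_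
      have hj1 : 1 ≤ j := (Finset.mem_Ico.mp hj).1
      exact Real.log_mul (ne_of_gt (hposA j hj1)) (ne_of_gt (hposB j hj1))
    · intro j hj
      have hj1 : 1 ≤ j := (Finset.mem_Ico.mp hj).1
      exact ne_of_gt (mul_pos (hposA j hj1) (hposB j hj1))
    · exact ne_of_gt (Finset.prod_pos fun j hj =>
        mul_pos (hposA j (Finset.mem_Ico.mp hj).1) (hposB j (Finset.mem_Ico.mp hj).1))
    · exact ne_of_gt (hposA n hn)
  set G : ℕ → ℝ := fun n => ∑ j ∈ Finset.Ico 1 n, lam ^ j with hGdef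
  have hlog2 : (0:ℝ) ≤ Real.log 2 := Real.log_nonneg one_le_two
  -- bounds on log Q
  have hQ_low : ∀ n, 1 ≤ n →
      2 * Lc * G n - (n:ℝ) * Real.log 2 + lam ^ n * Lc ≤ Real.log (lurothQ a n) := by
    intro n hn
    rw [hQlog n hn]
    have h1 : ∑ j ∈ Finset.Ico 1 n, (2 * Lc * lam ^ j - Real.log 2) ≤
        ∑ j ∈ Finset.Ico 1 n, (Real.log (a j) + Real.log ((a j : ℝ) - 1)) := by
      refine Finset.sum_le_sum fun j hj => ?_
      have hj1 : 1 ≤ j := (Finset.mem_Ico.mp hj).1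
      have ha := hlog_low j hj1
      have hb := hlog1_low j hj1
      linarith
    have h2 : ∑ j ∈ Finset.Ico 1 n, (2 * Lc * lam ^ j - Real.log 2) =
        2 * Lc * G n - ((n - 1 : ℕ) : ℝ) * Real.log 2 := by
      rw [Finset.sum_sub_distrib, Finset.sum_const, Nat.card_Ico, nsmul_eq_mul, hGdef,
        Finset.mul_sum]
    have h3 : ((n - 1 : ℕ) : ℝ) ≤ (n : ℝ) := by exact_mod_cast Nat.sub_le n 1
    have h4 : ((n - 1 : ℕ) : ℝ) * Real.log 2 ≤ (n:ℝ) * Real.log 2 :=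
      mul_le_mul_of_nonneg_right h3 hlog2
    have h5 := hlog_low n hn
    linarith
  have hQ_high : ∀ n, 1 ≤ n → Real.log (lurothQ a n) ≤
      2 * Lc * G n + 2 * Real.log d * (n:ℝ) + lam ^ n * Lc + Real.log d := by
    intro n hn
    rw [hQlog n hn]
    have h1 : ∑ j ∈ Finset.Ico 1 n, (Real.log (a j) + Real.log ((a j : ℝ) - 1)) ≤
        ∑ j ∈ Finset.Ico 1 n, (2 * Lc * lam ^ j + 2 * Real.log d) := by
      refine Finset.sum_le_sum fun j hj => ?_
      have hj1 : 1 ≤ j := (Finset.mem_Ico.mp hj).1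
      have ha := hlog_high j hj1
      have hb := hlog1_high j hj1
      linarith
    have h2 : ∑ j ∈ Finset.Ico 1 n, (2 * Lc * lam ^ j + 2 * Real.log d) =
        2 * Lc * G n + ((n - 1 : ℕ) : ℝ) * (2 * Real.log d) := by
      rw [Finset.sum_add_distrib, Finset.sum_const, Nat.card_Ico, nsmul_eq_mul, hGdef,
        Finset.mul_sum]
    have h3 : ((n - 1 : ℕ) : ℝ) ≤ (n : ℝ) := by exact_mod_cast Nat.sub_le n 1
    have h4 : ((n - 1 : ℕ) : ℝ) * (2 * Real.log d) ≤ (n:ℝ) * (2 * Real.log d) :=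
      mul_le_mul_of_nonneg_right h3 (by linarith)
    have h5 := hlog_high n hn
    linarith
  -- limits
  have hpowtop : Tendsto (fun n : ℕ => lam ^ n) atTop atTop :=
    tendsto_pow_atTop_atTop_of_one_lt hlam
  have hinv0 : Tendsto (fun n : ℕ => (lam ^ n)⁻¹) atTop (nhds 0) :=
    hpowtop.inv_tendsto_atTop
  have hn0 : Tendsto (fun n : ℕ => (n:ℝ) / lam ^ n) atTop (nhds 0) := by
    simpa using tendsto_pow_const_div_const_pow_of_one_lt 1 hlam
  have hGlim : Tendsto (fun n : ℕ => G n / lam ^ n) atTop (nhds (1/(lam-1))) := by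
    have heq : ∀ᶠ n in atTop, (1 - lam * (lam ^ n)⁻¹) / (lam - 1) = G n / lam ^ n := by
      filter_upwards [eventually_ge_atTop 1] with n hn
      have : G n = (lam ^ n - lam ^ 1) / (lam - 1) := by
        rw [hGdef]; exact geom_sum_Ico hlamne hn
      have hne := ne_of_gt (hpow n)
      have h1 : (1 - lam * (lam ^ n)⁻¹) = (lam ^ n - lam) / lam ^ n := by
        field_simp [hne]
      rw [h1, this, pow_one, div_div, div_div, mul_comm]
    refine Tendsto.congr' heq ?_
    have h : Tendsto (fun n : ℕ => (1 - lam * (lam ^ n)⁻¹) / (lam - 1)) atTop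
        (nhds ((1 - lam * 0)/(lam - 1))) :=
      (tendsto_const_nhds.sub (tendsto_const_nhds.mul hinv0)).div_const _
    simpa using h
  set L := Lc * (lam + 1) / (lam - 1) with hLdef
  have hLo : Tendsto (fun n : ℕ =>
      2*Lc*(G n / lam^n) - Real.log 2 * ((n:ℝ)/lam^n) + Lc) atTop (nhds L) := by
    have h : Tendsto (fun n : ℕ => 2*Lc*(G n / lam^n) - Real.log 2 * ((n:ℝ)/lam^n) + Lc)
        atTop (nhds (2*Lc*(1/(lam-1)) - Real.log 2 * 0 + Lc)) :=
      ((tendsto_const_nhds.mul hGlim).sub (tendsto_const_nhds.mul hn0)).add_const Lc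
    have hval : 2*Lc*(1/(lam-1)) - Real.log 2 * 0 + Lc = L := by
      rw [hLdef]; field_simp; ring
    rwa [hval] at h
  have hHi : Tendsto (fun n : ℕ =>
      2*Lc*(G n / lam^n) + 2*Real.log d*((n:ℝ)/lam^n) + Lc + Real.log d * (lam^n)⁻¹)
      atTop (nhds L) := by
    have h : Tendsto (fun n : ℕ =>
        2*Lc*(G n / lam^n) + 2*Real.log d*((n:ℝ)/lam^n) + Lc + Real.log d * (lam^n)⁻¹)
        atTop (nhds (2*Lc*(1/(lam-1)) + 2*Real.log d * 0 + Lc + Real.log d * 0)) :=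
      (((tendsto_const_nhds.mul hGlim).add
        (tendsto_const_nhds.mul hn0)).add_const Lc).add (tendsto_const_nhds.mul hinv0)
    have hval : 2*Lc*(1/(lam-1)) + 2*Real.log d * 0 + Lc + Real.log d * 0 = L := by
      rw [hLdef]; field_simp; ring
    rwa [hval] at h
  have hQlim : Tendsto (fun n : ℕ => Real.log (lurothQ a n) / lam ^ n) atTop (nhds L) := by
    refine tendsto_of_tendsto_of_tendsto_of_le_of_le' hLo hHi ?_ ?_
    · filter_upwards [eventually_ge_atTop 1] with n hn
      have h := hQ_low n hn
      have key : (2 * Lc * G n - (n:ℝ) * Real.log 2 + lam ^ n * Lc)/lam^n =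
          2*Lc*(G n / lam^n) - Real.log 2 * ((n:ℝ)/lam^n) + Lc := by
        field_simp
      rw [← key]
      exact (div_le_div_iff_of_pos_right (hpow n)).mpr h
    · filter_upwards [eventually_ge_atTop 1] with n hn
      have h := hQ_high n hn
      have key : (2 * Lc * G n + 2 * Real.log d * (n:ℝ) + lam ^ n * Lc + Real.log d)/lam^n =
          2*Lc*(G n / lam^n) + 2*Real.log d*((n:ℝ)/lam^n) + Lc + Real.log d * (lam^n)⁻¹ := by
        field_simp
      rw [← key]
      exact (div_le_div_iff_of_pos_right (hpow n)).mpr h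
  -- denominator
  have hAlim : Tendsto (fun n : ℕ => Real.log (a (n+1)) / lam ^ n) atTop (nhds (lam * Lc)) := by
    have hHi' : Tendsto (fun n : ℕ => lam * Lc + Real.log d * (lam^n)⁻¹) atTop
        (nhds (lam * Lc)) := by
      have h : Tendsto (fun n : ℕ => lam * Lc + Real.log d * (lam^n)⁻¹) atTop
          (nhds (lam * Lc + Real.log d * 0)) :=
        tendsto_const_nhds.add (tendsto_const_nhds.mul hinv0)
      simpa using h
    refine tendsto_of_tendsto_of_tendsto_of_le_of_le' tendsto_const_nhds hHi' ?_ ?_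
    · filter_upwards with n
      have h := hlog_low (n+1) (Nat.le_add_left 1 n)
      rw [pow_succ] at h
      rw [le_div_iff₀ (hpow n)]
      nlinarith [h]
    · filter_upwards with n
      have h := hlog_high (n+1) (Nat.le_add_left 1 n)
      rw [pow_succ] at h
      rw [div_le_iff₀ (hpow n)]
      have hexp : (lam * Lc + Real.log d * (lam^n)⁻¹) * lam^n =
          lam^n * lam * Lc + Real.log d := by
        field_simp
      rw [hexp]
      linarith
  have hden_ne : lam * Lc ≠ 0 := ne_of_gt (mul_pos hlam0 hLc)
  have hfinal := hQlim.div hAlim hden_ne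
  have hval : L / (lam * Lc) = (lam + 1) / (lam * (lam - 1)) := by
    rw [hLdef]
    field_simp
  rw [hval] at hfinal
  refine Tendsto.congr (fun n => ?_) hfinal
  have hy : (0:ℝ) < Real.log (a (n+1)) := by
    refine Real.log_pos ?_
    have := ha2 (n+1) (Nat.le_add_left 1 n)
    exact_mod_cast lt_of_lt_of_le (by norm_num) this
  have hz : (lam:ℝ)^n ≠ 0 := ne_of_gt (hpow n)
  have hy' : Real.log (a (n+1)) ≠ 0 := ne_of_gt hy
  show Real.log (lurothQ a n) / lam ^ n / (Real.log (a (n+1)) / lam ^ n) =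
    Real.log (lurothQ a n) / Real.log (a (n+1))
  field_simp
end

section
/- For every β > 0, the set {x = ⟨a_1, a_2, …⟩ ∈ (0,1] : lim_{n→∞} (log a_{n+1})/(log Q_n) = β} has Hausdorff dimension at most 1/(2 + β). -/
/-- The Lüroth map L(x) = ⌊1/x⌋(⌊1/x⌋+1)x − ⌊1/x⌋, with L(0) = 0. -/
noncomputable def lurothL (x : ℝ) : ℝ :=
  if x = 0 then 0 else (⌊1 / x⌋ : ℝ) * ((⌊1 / x⌋ : ℝ) + 1) * x - (⌊1 / x⌋ : ℝ)

/-- The n-th Lüroth digit (1-indexed): a_n(x) = ⌊1/L^{n−1}(x)⌋ + 1. -/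
noncomputable def lurothDigit (n : ℕ) (x : ℝ) : ℕ :=
  (⌊1 / lurothL^[n - 1] x⌋).toNat + 1

/-!
If `log a_{n+1} / log Q_n → β > γ`, then eventually `a_{n+1} ≥ Q_n ^ γ`, so the set lies in the
countable union of the sets `E_N = growthSet γ N` of points with `a_{n+1} ≥ Q_n ^ γ` for `n ≥ N`,
and it suffices that their `s`-dimensional Hausdorff content `H` vanishes for `s > 1 / (2 + γ)`.

The Lüroth map is self-similar: a point with first digit `a` is `ψ_a (L x)` for an affine branch
`ψ_a` of slope `1 / (a (a - 1))`, so `H(A) ≤ ∑ₐ (a (a - 1))^(-s) H(B_a)` whenever `L` maps the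
digit-`a` part of `A` into `B_a`. As `L` maps `E_{N+1}` into `E_N` and `E_1 ⊆ G_1`, everything
reduces to the sets `G_c = scaledGrowthSet γ c` of points with `a_1 ≥ c^(γ/2)` and
`a_{n+1} ≥ (c Q_n)^γ`; `L` maps `G_c` into `G_{c a (a - 1)}`, only digits `a ≥ c^(γ/2)` occurring.
The trivial bound `H(G_c) ≤ 2^s c^(-γ s / 2)` fed into this recursion gains a factor `1/2` once
`c` is large, because the tail of `∑ₐ (a (a - 1))^(-(1 + γ/2) s)` is small: this series converges
exactly when `(2 + γ) s > 1`. So `H(G_c) = 0` for large `c`, hence for all `c ≥ 1`, and then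
`H(E_N) = 0`.
-/

open Set Filter MeasureTheory Topology
open scoped NNReal ENNReal

section LurothMap

variable {x : ℝ}

lemma lurothDigit_eq (n : ℕ) (x : ℝ) : lurothDigit n x = ⌊1 / lurothL^[n - 1] x⌋₊ + 1 := by
  rw [lurothDigit, Int.floor_toNat]

lemma lurothDigit_one (x : ℝ) : lurothDigit 1 x = ⌊1 / x⌋₊ + 1 := by
  simp [lurothDigit_eq]

lemma lurothDigit_succ_lurothL (n : ℕ) (x : ℝ) :
    lurothDigit (n + 1) (lurothL x) = lurothDigit (n + 2) x := by
  simp [lurothDigit_eq, Function.iterate_succ_apply]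

lemma lurothL_eq (hx : 0 < x) :
    lurothL x = ⌊1 / x⌋₊ * (⌊1 / x⌋₊ + 1) * x - ⌊1 / x⌋₊ := by
  rw [lurothL, if_neg hx.ne', ← Int.natCast_floor_eq_floor (by positivity)]
  push_cast
  ring

lemma one_le_floor_one_div (hx : x ∈ Ioc 0 1) : 1 ≤ ⌊1 / x⌋₊ :=
  Nat.le_floor (by rw [Nat.cast_one, le_div_iff₀ hx.1, one_mul]; exact hx.2)

lemma floor_one_div_mul_le_one (hx : 0 < x) : ⌊1 / x⌋₊ * x ≤ 1 :=
  (le_div_iff₀ hx).1 (Nat.floor_le (by positivity))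

lemma one_lt_floor_one_div_add_one_mul (hx : 0 < x) : 1 < (⌊1 / x⌋₊ + 1) * x :=
  (div_lt_iff₀ hx).1 (Nat.lt_floor_add_one _)

lemma lurothL_mem_Ioc (hx : x ∈ Ioc 0 1) : lurothL x ∈ Ioc 0 1 := by
  have hk : (1 : ℝ) ≤ ⌊1 / x⌋₊ := by exact_mod_cast one_le_floor_one_div hx
  have hle := floor_one_div_mul_le_one hx.1
  have hlt := one_lt_floor_one_div_add_one_mul hx.1
  rw [lurothL_eq hx.1]
  constructor <;> nlinarith

lemma lurothL_iterate_mem_Ioc (hx : x ∈ Ioc 0 1) (n : ℕ) : lurothL^[n] x ∈ Ioc 0 1 := by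
  induction n with
  | zero => exact hx
  | succ n ih => rw [Function.iterate_succ_apply']; exact lurothL_mem_Ioc ih

lemma two_le_lurothDigit (hx : x ∈ Ioc 0 1) (n : ℕ) : 2 ≤ lurothDigit n x := by
  rw [lurothDigit_eq]
  have := one_le_floor_one_div (lurothL_iterate_mem_Ioc hx (n - 1))
  omega

lemma lurothDigit_one_mul_le_two (hx : x ∈ Ioc 0 1) : (lurothDigit 1 x : ℝ) * x ≤ 2 := by
  rw [lurothDigit_one]
  push_cast
  linarith [floor_one_div_mul_le_one hx.1, hx.2]

end LurothMap

lemma le_lurothQ {a : ℕ → ℕ} (ha : ∀ j, 2 ≤ a j) (n : ℕ) : a n ≤ lurothQ a n :=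
  Nat.le_mul_of_pos_left _ <| Finset.prod_pos fun j _ => by
    have := ha j
    exact Nat.mul_pos (by omega) (by omega)

lemma lurothQ_succ {a b : ℕ → ℕ} (hab : ∀ j, 1 ≤ j → b j = a (j + 1)) {n : ℕ} (hn : 1 ≤ n) :
    lurothQ a (n + 1) = a 1 * (a 1 - 1) * lurothQ b n := by
  have htail : ∏ j ∈ Finset.Ico 2 (n + 1), a j * (a j - 1) =
      ∏ j ∈ Finset.Ico 1 n, b j * (b j - 1) := by
    rw [← Finset.prod_Ico_add' (fun j => a j * (a j - 1)) 1 n 1]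
    exact Finset.prod_congr rfl fun j hj => by rw [hab j (Finset.mem_Ico.1 hj).1]
  rw [lurothQ, lurothQ, Finset.prod_eq_prod_Ico_succ_bot (by omega), htail, hab n hn]
  ring

lemma lurothQ_lurothL {x : ℝ} {n : ℕ} (hn : 1 ≤ n) :
    lurothQ (lurothDigit · x) (n + 1) =
      lurothDigit 1 x * (lurothDigit 1 x - 1) * lurothQ (lurothDigit · (lurothL x)) n := by
  refine lurothQ_succ (fun j hj => ?_) hn
  obtain ⟨i, rfl⟩ := Nat.exists_eq_add_of_le' hj
  exact lurothDigit_succ_lurothL i x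

/-- The length `1 / (a (a - 1))` of the cylinder `{a_1 = a} = (1/a, 1/(a-1)]`; it is `0` for
`a < 2`, so that these digits drop out of the sums below. -/
noncomputable def cylinderLength (a : ℕ) : ℝ≥0 := ((a * (a - 1) : ℕ) : ℝ≥0)⁻¹

noncomputable def lurothBranch (a : ℕ) (y : ℝ) : ℝ := (y + (a - 1 : ℕ)) * cylinderLength a

lemma cylinderLength_of_lt_two {a : ℕ} (ha : a < 2) : cylinderLength a = 0 := by
  interval_cases a <;> simp [cylinderLength]

lemma lipschitzWith_lurothBranch (a : ℕ) : LipschitzWith (cylinderLength a) (lurothBranch a) := by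
  refine LipschitzWith.of_dist_le_mul fun y z => le_of_eq ?_
  rw [Real.dist_eq, Real.dist_eq, lurothBranch, lurothBranch, ← sub_mul, add_sub_add_right_eq_sub,
    abs_mul, NNReal.abs_eq, mul_comm]

lemma lurothBranch_lurothL {x : ℝ} (hx : x ∈ Ioc 0 1) :
    lurothBranch (lurothDigit 1 x) (lurothL x) = x := by
  have hk : (1 : ℝ) ≤ ⌊1 / x⌋₊ := by exact_mod_cast one_le_floor_one_div hx
  rw [lurothBranch, cylinderLength, lurothDigit_one, lurothL_eq hx.1, Nat.add_sub_cancel]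
  push_cast
  field_simp
  ring

namespace MeasureTheory

variable {X : Type*} [EMetricSpace X]

/-- Unlike `μH[d]`, this content is finite on bounded sets, which is what lets the
self-similarity recursion for `scaledGrowthSet` start. -/
noncomputable def hausdorffContent (d : ℝ) : OuterMeasure X :=
  OuterMeasure.boundedBy fun s => Metric.ediam s ^ d

lemma hausdorffContent_le_ediam_rpow (d : ℝ) (s : Set X) :
    hausdorffContent d s ≤ Metric.ediam s ^ d :=
  OuterMeasure.boundedBy_le s

lemma _root_.LipschitzWith.hausdorffContent_image_le {Y : Type*} [EMetricSpace Y] {K : ℝ≥0}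
    {f : X → Y} (hf : LipschitzWith K f) {d : ℝ} (hd : 0 ≤ d) (s : Set X) :
    hausdorffContent d (f '' s) ≤ (K : ℝ≥0∞) ^ d * hausdorffContent d s := by
  suffices OuterMeasure.comap f (hausdorffContent d) ≤ (K : ℝ≥0∞) ^ d • hausdorffContent d from
    this s
  unfold hausdorffContent OuterMeasure.boundedBy
  rw [OuterMeasure.smul_ofFunction (ENNReal.rpow_ne_top_of_nonneg hd ENNReal.coe_ne_top)]
  refine OuterMeasure.le_ofFunction.2 fun t => ?_
  rcases t.eq_empty_or_nonempty with rfl | ht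
  · simp
  · simp only [OuterMeasure.comap_apply, Pi.smul_apply, smul_eq_mul, ht, ciSup_unique]
    calc hausdorffContent d (f '' t) ≤ Metric.ediam (f '' t) ^ d :=
          hausdorffContent_le_ediam_rpow d _
      _ ≤ ((K : ℝ≥0∞) * Metric.ediam t) ^ d := ENNReal.rpow_le_rpow (hf.ediam_image_le t) hd
      _ = (K : ℝ≥0∞) ^ d * Metric.ediam t ^ d := ENNReal.mul_rpow_of_nonneg _ _ hd

lemma hausdorffMeasure_eq_zero_of_hausdorffContent_eq_zero [MeasurableSpace X] [BorelSpace X]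
    {d : ℝ} (hd : 0 < d) {s : Set X} (h : hausdorffContent d s = 0) : μH[d] s = 0 := by
  rw [Measure.hausdorffMeasure_apply, ← nonpos_iff_eq_zero]
  refine iSup₂_le fun r hr => ENNReal.le_of_forall_pos_le_add fun ε hε _ => ?_
  have hpos : hausdorffContent d s < min (ε : ℝ≥0∞) (r ^ d) := by
    rw [h, lt_min_iff]
    exact ⟨by exact_mod_cast hε, ENNReal.rpow_pos_of_nonneg hr hd.le⟩
  obtain ⟨t, hst, ht⟩ : ∃ t : ℕ → Set X, s ⊆ ⋃ n, t n ∧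
      ∑' n, ⨆ _ : (t n).Nonempty, Metric.ediam (t n) ^ d < min (ε : ℝ≥0∞) (r ^ d) := by
    simpa only [hausdorffContent, OuterMeasure.boundedBy_apply, iInf_lt_iff, exists_prop] using hpos
  refine iInf_le_of_le t (iInf_le_of_le hst (iInf_le_of_le (fun n => ?_) ?_))
  · rcases (t n).eq_empty_or_nonempty with he | hne
    · simp [he]
    have hn := (ENNReal.le_tsum n).trans_lt (ht.trans_le (min_le_right _ _))
    simp only [hne, ciSup_unique] at hn
    exact ((ENNReal.rpow_lt_rpow_iff hd).1 hn).le
  · rw [zero_add]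
    exact (ht.trans_le (min_le_left _ _)).le

end MeasureTheory

section Content

variable {s : ℝ}

lemma hausdorffContent_le_tsum_of_lurothL_mem (hs : 0 ≤ s) {A : Set ℝ} (hA : A ⊆ Ioc 0 1)
    {B : ℕ → Set ℝ} (hAB : ∀ x ∈ A, lurothL x ∈ B (lurothDigit 1 x)) :
    hausdorffContent s A ≤ ∑' a, (cylinderLength a : ℝ≥0∞) ^ s * hausdorffContent s (B a) := by
  have hcover : A ⊆ ⋃ a, lurothBranch a '' B a := fun x hx =>
    mem_iUnion.2 ⟨lurothDigit 1 x, lurothL x, hAB x hx, lurothBranch_lurothL (hA hx)⟩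
  calc hausdorffContent s A ≤ ∑' a, hausdorffContent s (lurothBranch a '' B a) :=
        (measure_mono hcover).trans (measure_iUnion_le _)
    _ ≤ _ := ENNReal.tsum_le_tsum fun a =>
        (lipschitzWith_lurothBranch a).hausdorffContent_image_le hs _

lemma hausdorffContent_eq_zero_of_lurothL_mem (hs : 0 < s) {A : Set ℝ} (hA : A ⊆ Ioc 0 1)
    {B : ℕ → Set ℝ} (hB : ∀ a, 2 ≤ a → hausdorffContent s (B a) = 0)
    (hAB : ∀ x ∈ A, lurothL x ∈ B (lurothDigit 1 x)) : hausdorffContent s A = 0 := by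
  refine nonpos_iff_eq_zero.1 <| (hausdorffContent_le_tsum_of_lurothL_mem hs.le hA hAB).trans_eq <|
    ENNReal.tsum_eq_zero.2 fun a => ?_
  rcases lt_or_ge a 2 with ha | ha
  · rw [cylinderLength_of_lt_two ha, ENNReal.coe_zero, ENNReal.zero_rpow_of_pos hs, zero_mul]
  · rw [hB a ha, mul_zero]

end Content

section GrowthSets

variable {γ : ℝ} {x : ℝ}

def growthSet (γ : ℝ) (N : ℕ) : Set ℝ :=
  {x ∈ Ioc 0 1 | ∀ n, N ≤ n → (lurothQ (lurothDigit · x) n : ℝ) ^ γ ≤ lurothDigit (n + 1) x}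

def scaledGrowthSet (γ : ℝ) (c : ℕ) : Set ℝ :=
  {x ∈ Ioc 0 1 | (c : ℝ) ^ (γ / 2) ≤ lurothDigit 1 x ∧
    ∀ n, 1 ≤ n → ((c * lurothQ (lurothDigit · x) n : ℕ) : ℝ) ^ γ ≤ lurothDigit (n + 1) x}

lemma growthSet_subset_succ (N : ℕ) : growthSet γ N ⊆ growthSet γ (N + 1) :=
  fun _ ⟨hxI, hx⟩ => ⟨hxI, fun n hn => hx n (by omega)⟩

lemma growthSet_one_subset : growthSet γ 1 ⊆ scaledGrowthSet γ 1 := by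
  rintro x ⟨hxI, hx⟩
  refine ⟨hxI, ?_, fun n hn => by simpa using hx n hn⟩
  rw [Nat.cast_one, Real.one_rpow]
  exact_mod_cast (two_le_lurothDigit hxI 1).trans' one_le_two

lemma lurothL_mem_growthSet (hγ : 0 ≤ γ) {N : ℕ} (hx : x ∈ growthSet γ (N + 2)) :
    lurothL x ∈ growthSet γ (N + 1) := by
  obtain ⟨hxI, hx⟩ := hx
  refine ⟨lurothL_mem_Ioc hxI, fun n hn => ?_⟩
  rw [lurothDigit_succ_lurothL]
  refine le_trans (Real.rpow_le_rpow (by positivity) ?_ hγ) (hx (n + 1) (by omega))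
  have := two_le_lurothDigit hxI 1
  rw [lurothQ_lurothL (by omega)]
  exact_mod_cast Nat.le_mul_of_pos_left _ (Nat.mul_pos (by omega) (by omega))

lemma lurothL_mem_scaledGrowthSet (hγ : 0 ≤ γ) {c : ℕ} (hx : x ∈ scaledGrowthSet γ c) :
    lurothL x ∈ scaledGrowthSet γ (c * (lurothDigit 1 x * (lurothDigit 1 x - 1))) := by
  set a := lurothDigit 1 x
  obtain ⟨hxI, -, htail⟩ := hx
  have hcm : c * (a * (a - 1)) ≤ (c * a) ^ 2 :=
    calc c * (a * (a - 1)) ≤ c * (a * a) :=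
          Nat.mul_le_mul_left _ (Nat.mul_le_mul_left _ (Nat.sub_le a 1))
      _ ≤ c * c * (a * a) := Nat.mul_le_mul_right _ (Nat.le_mul_self c)
      _ = (c * a) ^ 2 := by ring
  refine ⟨lurothL_mem_Ioc hxI, ?_, fun n hn => ?_⟩
  · calc ((c * (a * (a - 1)) : ℕ) : ℝ) ^ (γ / 2) ≤ (((c * a) ^ 2 : ℕ) : ℝ) ^ (γ / 2) :=
          Real.rpow_le_rpow (by positivity) (by exact_mod_cast hcm) (by positivity)
      _ = ((c * a : ℕ) : ℝ) ^ γ := by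
          rw [Nat.cast_pow, ← Real.rpow_natCast, ← Real.rpow_mul (by positivity)]
          ring_nf
      _ ≤ lurothDigit 2 x := by simpa [lurothQ] using htail 1 le_rfl
      _ = lurothDigit 1 (lurothL x) := congrArg Nat.cast (lurothDigit_succ_lurothL 0 x).symm
  · rw [lurothDigit_succ_lurothL, mul_assoc, ← lurothQ_lurothL hn]
    exact htail (n + 1) (by omega)

lemma scaledGrowthSet_subset_Icc {c : ℕ} (hc : 1 ≤ c) :
    scaledGrowthSet γ c ⊆ Icc 0 (2 * ((c : ℝ) ^ (γ / 2))⁻¹) := by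
  rintro x ⟨hxI, hhead, -⟩
  have hpos : 0 < (c : ℝ) ^ (γ / 2) := Real.rpow_pos_of_pos (by exact_mod_cast hc) _
  refine ⟨hxI.1.le, ?_⟩
  rw [← div_eq_mul_inv, le_div_iff₀ hpos]
  nlinarith [lurothDigit_one_mul_le_two hxI, hxI.1]

end GrowthSets

section ScaledGrowthContent

variable {s γ : ℝ}

lemma cylinderLength_le (a : ℕ) : cylinderLength a ≤ 2 * ((a : ℝ≥0) ^ (2 : ℝ))⁻¹ := by
  rcases lt_or_ge a 2 with ha | ha
  · rw [cylinderLength_of_lt_two ha]; exact zero_le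
  have hsq : (a : ℝ≥0) ^ (2 : ℝ) ≤ ((a * (a - 1) : ℕ) : ℝ≥0) * 2 := by
    have : a ^ 2 ≤ a * (a - 1) * 2 := by zify [show 1 ≤ a by omega]; nlinarith
    rw [NNReal.rpow_two]; exact_mod_cast this
  calc cylinderLength a ≤ ((a : ℝ≥0) ^ (2 : ℝ) / 2)⁻¹ :=
        inv_anti₀ (by positivity) ((div_le_iff₀ two_pos).2 hsq)
    _ = 2 * ((a : ℝ≥0) ^ (2 : ℝ))⁻¹ := by rw [inv_div, div_eq_mul_inv]

lemma summable_cylinderLength_rpow {p : ℝ} (hp : 1 < 2 * p) :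
    Summable fun a => cylinderLength a ^ p := by
  refine NNReal.summable_of_le (fun a => ?_) ((NNReal.summable_rpow_inv.2 hp).mul_left (2 ^ p))
  calc cylinderLength a ^ p ≤ (2 * ((a : ℝ≥0) ^ (2 : ℝ))⁻¹) ^ p :=
        NNReal.rpow_le_rpow (cylinderLength_le a) (by linarith)
    _ = 2 ^ p * ((a : ℝ≥0) ^ (2 * p))⁻¹ := by
        rw [NNReal.mul_rpow, NNReal.inv_rpow, ← NNReal.rpow_mul]

lemma hausdorffContent_scaledGrowthSet_le (hs : 0 ≤ s) {c : ℕ} (hc : 1 ≤ c) :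
    hausdorffContent s (scaledGrowthSet γ c) ≤
      2 ^ s * (((c : ℝ≥0)⁻¹ ^ (γ / 2 * s) : ℝ≥0) : ℝ≥0∞) := by
  have hdiam : ENNReal.ofReal (2 * ((c : ℝ) ^ (γ / 2))⁻¹ - 0) =
      ((2 * (c : ℝ≥0)⁻¹ ^ (γ / 2) : ℝ≥0) : ℝ≥0∞) := by
    rw [sub_zero, ← ENNReal.ofReal_coe_nnreal]
    push_cast [NNReal.coe_rpow, NNReal.inv_rpow]
    rfl
  calc hausdorffContent s (scaledGrowthSet γ c)
      ≤ hausdorffContent s (Icc 0 (2 * ((c : ℝ) ^ (γ / 2))⁻¹)) :=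
        measure_mono (scaledGrowthSet_subset_Icc hc)
    _ ≤ Metric.ediam (Icc 0 (2 * ((c : ℝ) ^ (γ / 2))⁻¹)) ^ s :=
        hausdorffContent_le_ediam_rpow s _
    _ = 2 ^ s * (((c : ℝ≥0)⁻¹ ^ (γ / 2 * s) : ℝ≥0) : ℝ≥0∞) := by
        rw [Real.ediam_Icc, hdiam, ← ENNReal.coe_rpow_of_nonneg _ hs, NNReal.mul_rpow,
          ← NNReal.rpow_mul, ENNReal.coe_mul, ENNReal.coe_rpow_of_nonneg _ hs]
        rfl

lemma hausdorffContent_scaledGrowthSet_le_tsum (hs : 0 ≤ s) (hγ : 0 ≤ γ) (c : ℕ) :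
    hausdorffContent s (scaledGrowthSet γ c) ≤ ∑' a, (cylinderLength a : ℝ≥0∞) ^ s *
      (if (c : ℝ) ^ (γ / 2) ≤ a then hausdorffContent s (scaledGrowthSet γ (c * (a * (a - 1))))
        else 0) := by
  let B : ℕ → Set ℝ := fun a =>
    if (c : ℝ) ^ (γ / 2) ≤ a then scaledGrowthSet γ (c * (a * (a - 1))) else ∅
  have hAB : ∀ x ∈ scaledGrowthSet γ c, lurothL x ∈ B (lurothDigit 1 x) := fun x hx => by
    simp only [B, if_pos hx.2.1]
    exact lurothL_mem_scaledGrowthSet hγ hx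
  convert hausdorffContent_le_tsum_of_lurothL_mem hs (fun x hx => hx.1) hAB using 3 with a
  simp only [B]
  split_ifs <;> simp

lemma coe_cylinderLength_rpow_mul {q : ℝ} (hs : 0 < s) (hq : 0 ≤ q) (c a : ℕ) :
    (cylinderLength a : ℝ≥0∞) ^ s * (((c * (a * (a - 1)) : ℕ) : ℝ≥0)⁻¹ ^ q : ℝ≥0) =
      ((c : ℝ≥0)⁻¹ ^ q : ℝ≥0) * (cylinderLength a ^ (s + q) : ℝ≥0) := by
  have hinv : ((c * (a * (a - 1)) : ℕ) : ℝ≥0)⁻¹ = (c : ℝ≥0)⁻¹ * cylinderLength a := by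
    rw [Nat.cast_mul, mul_inv]
    rfl
  rw [hinv, NNReal.mul_rpow, NNReal.rpow_add' (add_pos_of_pos_of_nonneg hs hq).ne',
    ← ENNReal.coe_rpow_of_nonneg _ hs.le, ENNReal.coe_mul, ENNReal.coe_mul]
  ring

lemma hausdorffContent_scaledGrowthSet_le_half (hs : 0 < s) (hγ : 0 ≤ γ) {N C₀ : ℕ}
    (hN : 2 ≤ N) (htail : ∑' k, ((cylinderLength (k + N) ^ (s + γ / 2 * s) : ℝ≥0) : ℝ≥0∞) ≤ 2⁻¹)
    (hC₀ : ∀ c, C₀ ≤ c → (N : ℝ) ≤ (c : ℝ) ^ (γ / 2)) {B : ℝ≥0∞}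
    (hB : ∀ c, C₀ ≤ c → hausdorffContent s (scaledGrowthSet γ c) ≤
      B * (((c : ℝ≥0)⁻¹ ^ (γ / 2 * s) : ℝ≥0) : ℝ≥0∞))
    {c : ℕ} (hc : C₀ ≤ c) :
    hausdorffContent s (scaledGrowthSet γ c) ≤
      B * 2⁻¹ * (((c : ℝ≥0)⁻¹ ^ (γ / 2 * s) : ℝ≥0) : ℝ≥0∞) := by
  set q := γ / 2 * s
  set w : ℝ≥0∞ := (((c : ℝ≥0)⁻¹ ^ q : ℝ≥0) : ℝ≥0∞)
  set g : ℕ → ℝ≥0∞ := fun a => (cylinderLength a : ℝ≥0∞) ^ s *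
    (if (c : ℝ) ^ (γ / 2) ≤ a then hausdorffContent s (scaledGrowthSet γ (c * (a * (a - 1))))
      else 0)
  have hg_lt : ∀ a < N, g a = 0 := fun a ha => by
    simp only [g, if_neg (not_le.2 ((Nat.cast_lt.2 ha).trans_le (hC₀ c hc))), mul_zero]
  have hg_le : ∀ k, g (k + N) ≤ B * w * ((cylinderLength (k + N) ^ (s + q) : ℝ≥0) : ℝ≥0∞) := by
    intro k
    set a := k + N
    have hm : 1 ≤ a * (a - 1) := Nat.one_le_iff_ne_zero.2 (Nat.mul_ne_zero (by omega) (by omega))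
    simp only [g]
    split_ifs
    · calc _ ≤ (cylinderLength a : ℝ≥0∞) ^ s *
            (B * ((((c * (a * (a - 1)) : ℕ) : ℝ≥0)⁻¹ ^ q : ℝ≥0) : ℝ≥0∞)) :=
            mul_le_mul_right (hB _ (hc.trans (Nat.le_mul_of_pos_right _ hm))) _
        _ = B * w * ((cylinderLength a ^ (s + q) : ℝ≥0) : ℝ≥0∞) := by
            rw [mul_left_comm, coe_cylinderLength_rpow_mul hs (by positivity), mul_assoc]
    · simp
  calc hausdorffContent s (scaledGrowthSet γ c) ≤ ∑' a, g a :=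
        hausdorffContent_scaledGrowthSet_le_tsum hs.le hγ c
    _ = ∑' k, g (k + N) := by
        rw [← ENNReal.summable.sum_add_tsum_nat_add',
          Finset.sum_eq_zero fun a ha => hg_lt a (Finset.mem_range.1 ha), zero_add]
    _ ≤ ∑' k, B * w * ((cylinderLength (k + N) ^ (s + q) : ℝ≥0) : ℝ≥0∞) :=
        ENNReal.tsum_le_tsum hg_le
    _ ≤ B * w * 2⁻¹ := by rw [ENNReal.tsum_mul_left]; exact mul_le_mul_right htail _
    _ = B * 2⁻¹ * w := by ring

lemma exists_hausdorffContent_scaledGrowthSet_eq_zero (hs : 0 < s) (hγ : 0 < γ)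
    (hγs : 1 < (2 + γ) * s) :
    ∃ C₀ : ℕ, ∀ c, C₀ ≤ c → hausdorffContent s (scaledGrowthSet γ c) = 0 := by
  set q := γ / 2 * s
  have hsum : ∑' a, ((cylinderLength a ^ (s + q) : ℝ≥0) : ℝ≥0∞) ≠ ⊤ :=
    ENNReal.tsum_coe_ne_top_iff_summable.2 <| summable_cylinderLength_rpow <| by
      have : 2 * (s + q) = (2 + γ) * s := by ring
      linarith
  obtain ⟨N, htail, hN⟩ := (((ENNReal.tendsto_sum_nat_add _ hsum).eventually
    (ge_mem_nhds (by norm_num : (0 : ℝ≥0∞) < 2⁻¹))).and (eventually_ge_atTop 2)).exists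
  obtain ⟨C₀, hC₀⟩ := eventually_atTop.1 <|
    (((tendsto_rpow_atTop (half_pos hγ)).comp tendsto_natCast_atTop_atTop).eventually_ge_atTop
      (N : ℝ)).and (eventually_ge_atTop 1)
  have hbound : ∀ j : ℕ, ∀ c, C₀ ≤ c → hausdorffContent s (scaledGrowthSet γ c) ≤
      2 ^ s * 2⁻¹ ^ j * (((c : ℝ≥0)⁻¹ ^ q : ℝ≥0) : ℝ≥0∞) := by
    intro j
    induction j with
    | zero => intro c hc; simpa using hausdorffContent_scaledGrowthSet_le hs.le (hC₀ c hc).2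
    | succ j ih =>
      intro c hc
      rw [pow_succ, ← mul_assoc]
      exact hausdorffContent_scaledGrowthSet_le_half hs hγ.le hN htail
        (fun c hc => (hC₀ c hc).1) ih hc
  refine ⟨C₀, fun c hc => ?_⟩
  have hlim : Tendsto (fun j : ℕ => 2 ^ s * 2⁻¹ ^ j * (((c : ℝ≥0)⁻¹ ^ q : ℝ≥0) : ℝ≥0∞))
      atTop (𝓝 0) := by
    have h2 := ENNReal.tendsto_pow_atTop_nhds_zero_of_lt_one (r := 2⁻¹) (by norm_num)
    have h2s : (2 : ℝ≥0∞) ^ s ≠ ⊤ := ENNReal.rpow_ne_top_of_nonneg hs.le ENNReal.ofNat_ne_top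
    simpa using ENNReal.Tendsto.mul_const (ENNReal.Tendsto.const_mul h2 (Or.inr h2s))
      (Or.inr ENNReal.coe_ne_top)
  exact nonpos_iff_eq_zero.1 (ge_of_tendsto' hlim fun j => hbound j c hc)

lemma hausdorffContent_scaledGrowthSet_eq_zero (hs : 0 < s) (hγ : 0 < γ)
    (hγs : 1 < (2 + γ) * s) {c : ℕ} (hc : 1 ≤ c) :
    hausdorffContent s (scaledGrowthSet γ c) = 0 := by
  obtain ⟨C₀, hC₀⟩ := exists_hausdorffContent_scaledGrowthSet_eq_zero hs hγ hγs
  suffices ∀ j c, 1 ≤ c → C₀ ≤ 2 ^ j * c → hausdorffContent s (scaledGrowthSet γ c) = 0 from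
    this C₀ c hc (C₀.lt_two_pow_self.le.trans (Nat.le_mul_of_pos_right _ hc))
  intro j
  induction j with
  | zero => intro c _ h; exact hC₀ c (by simpa using h)
  | succ j ih =>
    intro c hc h
    refine hausdorffContent_eq_zero_of_lurothL_mem hs (fun x (hx : x ∈ scaledGrowthSet γ c) => hx.1)
      (B := fun a => scaledGrowthSet γ (c * (a * (a - 1)))) (fun a ha => ?_)
      (fun x hx => lurothL_mem_scaledGrowthSet hγ.le hx)
    have hm : 2 ≤ a * (a - 1) := Nat.mul_le_mul ha (by omega : 1 ≤ a - 1)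
    refine ih _ (hc.trans (Nat.le_mul_of_pos_right _ (by omega))) ?_
    calc C₀ ≤ 2 ^ (j + 1) * c := h
      _ = 2 ^ j * (c * 2) := by ring
      _ ≤ 2 ^ j * (c * (a * (a - 1))) := by gcongr

lemma hausdorffContent_growthSet_eq_zero (hs : 0 < s) (hγ : 0 < γ) (hγs : 1 < (2 + γ) * s)
    (N : ℕ) : hausdorffContent s (growthSet γ N) = 0 := by
  have key : ∀ N, hausdorffContent s (growthSet γ (N + 1)) = 0 := by
    intro N
    induction N with
    | zero =>
      exact measure_mono_null growthSet_one_subset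
        (hausdorffContent_scaledGrowthSet_eq_zero hs hγ hγs le_rfl)
    | succ N ih =>
      exact hausdorffContent_eq_zero_of_lurothL_mem hs
        (fun x (hx : x ∈ growthSet γ (N + 2)) => hx.1) (fun _ _ => ih)
        (fun x hx => lurothL_mem_growthSet hγ.le hx)
  exact measure_mono_null (growthSet_subset_succ N) (key N)

end ScaledGrowthContent

lemma dimH_le_of_forall_hausdorffMeasure_eq_zero {X : Type*} [EMetricSpace X] [MeasurableSpace X]
    [BorelSpace X] {A : Set X} {d₀ : ℝ} (h : ∀ d : ℝ, d₀ < d → μH[d] A = 0) :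
    dimH A ≤ ENNReal.ofReal d₀ := by
  refine dimH_le fun d hd => le_of_not_gt fun hlt => ?_
  rw [← ENNReal.ofReal_coe_nnreal, ENNReal.ofReal_lt_ofReal_iff'] at hlt
  simp [h d hlt.1] at hd

lemma Real.rpow_le_of_lt_log_div_log {Q a γ : ℝ} (hQ : 1 < Q) (ha : 0 < a)
    (h : γ < Real.log a / Real.log Q) : Q ^ γ ≤ a := by
  have hQ0 : 0 < Q := one_pos.trans hQ
  rw [lt_div_iff₀ (Real.log_pos hQ), ← Real.log_rpow hQ0] at h
  exact ((Real.log_lt_log_iff (Real.rpow_pos_of_pos hQ0 γ) ha).1 h).le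

lemma setOf_tendsto_subset_iUnion_growthSet {β γ : ℝ} (hγβ : γ < β) :
    {x ∈ Ioc (0 : ℝ) 1 | Tendsto (fun n : ℕ => Real.log (lurothDigit (n + 1) x) /
      Real.log (lurothQ (fun m => lurothDigit m x) n)) atTop (𝓝 β)} ⊆ ⋃ N, growthSet γ N := by
  rintro x ⟨hxI, hlim⟩
  obtain ⟨N, hN⟩ := eventually_atTop.1 (hlim.eventually (eventually_gt_nhds hγβ))
  refine mem_iUnion.2 ⟨N, hxI, fun n hn => Real.rpow_le_of_lt_log_div_log ?_ ?_ (hN n hn)⟩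
  · have := (two_le_lurothDigit hxI n).trans (le_lurothQ (two_le_lurothDigit hxI) n)
    exact_mod_cast this
  · exact Nat.cast_pos.2 (two_pos.trans_le (two_le_lurothDigit hxI (n + 1)))

/-- For β > 0, the set of x ∈ (0,1] with
lim (log a_{n+1})/(log Q_n) = β has Hausdorff dimension at most 1/(2 + β). -/
theorem luroth_growth_set_dimH_upper (β : ℝ) (hβ : 0 < β) :
    dimH {x ∈ Set.Ioc (0 : ℝ) 1 |
        Filter.Tendsto (fun n : ℕ =>
            Real.log (lurothDigit (n + 1) x) /
              Real.log (lurothQ (fun m => lurothDigit m x) n))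
          Filter.atTop (nhds β)}
      ≤ ENNReal.ofReal (1 / (2 + β)) := by
  refine dimH_le_of_forall_hausdorffMeasure_eq_zero fun s hs => ?_
  have hs0 : 0 < s := lt_trans (by positivity) hs
  have hinv : 1 / s - 2 < β := by
    rw [div_lt_iff₀ (by positivity)] at hs
    rw [sub_lt_iff_lt_add, div_lt_iff₀ hs0]
    linarith
  obtain ⟨γ, hγ, hγβ⟩ := exists_between (max_lt hβ hinv)
  have hγs : 1 < (2 + γ) * s := by
    have := (div_lt_iff₀ hs0).1 (sub_lt_iff_lt_add.1 ((le_max_right _ _).trans_lt hγ))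
    linarith
  refine measure_mono_null (setOf_tendsto_subset_iUnion_growthSet hγβ)
    (measure_iUnion_null fun N => ?_)
  exact hausdorffMeasure_eq_zero_of_hausdorffContent_eq_zero hs0
    (hausdorffContent_growthSet_eq_zero hs0 ((le_max_left _ _).trans_lt hγ) hγs N)
end

section
/- Let (s_n) be a sequence of integers with s_n ≥ 4, let (a_n) be Lüroth digits with s_n + 1 ≤ a_n, and let J_n(a) be the fundamental interval of (a_1,…,a_n) (closure of the union of cylinders C_{n+1}(a_1,…,a_n,b) over b ≥ s_{n+1}). Then the gap between J_n(a_1,…,a_{n−1},a_n) and J_n(a_1,…,a_{n−1},a_n−1) equals |J_n(a)|·(s_{n+1}−2), which is strictly greater than |J_n(a)|. -/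
/-- The fundamental interval J_n(a): the closure of the union over b ≥ s_{n+1}
of the cylinders C_{n+1}(a_1,…,a_n,b). -/
noncomputable def lurothJ (s a : ℕ → ℕ) (n : ℕ) : Set ℝ :=
  closure (⋃ b : ℕ, ⋃ (_ : s (n + 1) ≤ b),
    {x ∈ Set.Ioc (0 : ℝ) 1 |
      (∀ j ∈ Finset.Icc 1 n, lurothDigit j x = a j) ∧ lurothDigit (n + 1) x = b})

noncomputable def ll (a : ℕ → ℕ) : ℕ → ℝ
  | 0 => 1
  | n + 1 => ll a n / ((a (n + 1) : ℝ) * ((a (n + 1) : ℝ) - 1))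

noncomputable def lc (a : ℕ → ℕ) : ℕ → ℝ
  | 0 => 0
  | n + 1 => lc a n + ll a n / (a (n + 1) : ℝ)

lemma inv_le_swap {x y : ℝ} (hx : 0 < x) (hy : 0 < y) : x ≤ 1 / y ↔ y ≤ 1 / x := by
  rw [le_div_iff₀ hy, le_div_iff₀ hx, mul_comm]

lemma inv_lt_swap {x y : ℝ} (hx : 0 < x) (hy : 0 < y) : 1 / y < x ↔ 1 / x < y := by
  rw [div_lt_iff₀ hy, div_lt_iff₀ hx, mul_comm]

lemma floor_core {t : ℝ} (ht : 0 < t) {m : ℕ} (hm : 2 ≤ m) :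
    ⌊1 / t⌋ = (m : ℤ) - 1 ↔ (1 / (m : ℝ) < t ∧ t ≤ 1 / ((m : ℝ) - 1)) := by
  have h0 : (0:ℝ) < (m:ℝ) - 1 := by
    have : (2:ℝ) ≤ m := by exact_mod_cast hm
    linarith
  have hmpos : (0:ℝ) < (m:ℝ) := by linarith
  rw [Int.floor_eq_iff]
  push_cast
  rw [show (m:ℝ) - 1 + 1 = (m:ℝ) by ring]
  rw [inv_le_swap h0 ht, inv_lt_swap hmpos ht]
  tauto

lemma digit_eq_iff {t : ℝ} (ht : 0 < t) {m : ℕ} (hm : 2 ≤ m) :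
    (⌊1 / t⌋.toNat + 1 = m) ↔ (1 / (m : ℝ) < t ∧ t ≤ 1 / ((m : ℝ) - 1)) := by
  have hf : 0 ≤ ⌊1 / t⌋ := Int.floor_nonneg.mpr (by positivity)
  rw [← floor_core ht hm]
  omega

lemma digit_ge_iff {t : ℝ} (ht : 0 < t) {m : ℕ} (hm : 2 ≤ m) :
    (m ≤ ⌊1 / t⌋.toNat + 1) ↔ t ≤ 1 / ((m : ℝ) - 1) := by
  have h0 : (0:ℝ) < (m:ℝ) - 1 := by
    have : (2:ℝ) ≤ m := by exact_mod_cast hm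
    linarith
  have hf : 0 ≤ ⌊1 / t⌋ := Int.floor_nonneg.mpr (by positivity)
  have : (m ≤ ⌊1 / t⌋.toNat + 1) ↔ ((m : ℤ) - 1 ≤ ⌊1 / t⌋) := by omega
  rw [this, Int.le_floor, ← inv_le_swap h0 ht]
  push_cast
  tauto

lemma lurothL_eq_s18 {t : ℝ} {m : ℕ} (hm : 2 ≤ m) (h1 : 1 / (m : ℝ) < t)
    (h2 : t ≤ 1 / ((m : ℝ) - 1)) :
    lurothL t = (m : ℝ) * ((m : ℝ) - 1) * t - ((m : ℝ) - 1) := by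
  have hmpos : (0:ℝ) < (m:ℝ) := by
    have : (2:ℝ) ≤ m := by exact_mod_cast hm
    linarith
  have ht : 0 < t := lt_trans (by positivity) h1
  have hfl : ⌊1 / t⌋ = (m : ℤ) - 1 := (floor_core ht hm).mpr ⟨h1, h2⟩
  rw [lurothL, if_neg (ne_of_gt ht), hfl]
  push_cast; ring

lemma main_cyl (a : ℕ → ℕ) : ∀ n : ℕ, (∀ j, 1 ≤ j → j ≤ n → 2 ≤ a j) →
    0 ≤ lc a n ∧ 0 < ll a n ∧ lc a n + ll a n ≤ 1 ∧
    (∀ x : ℝ, (x ∈ Set.Ioc (0:ℝ) 1 ∧ ∀ j ∈ Finset.Icc 1 n, lurothDigit j x = a j) ↔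
       x ∈ Set.Ioc (lc a n) (lc a n + ll a n)) ∧
    (∀ x ∈ Set.Ioc (lc a n) (lc a n + ll a n),
       lurothL^[n] x = (x - lc a n) / ll a n) := by
  intro n
  induction n with
  | zero =>
    intro _
    refine ⟨le_refl _, one_pos, by norm_num [lc, ll], ?_, ?_⟩
    · intro x
      simp [lc, ll]
    · intro x _
      simp [lc, ll]
  | succ n ih =>
    intro ha
    obtain ⟨hc0, hl0, hcl1, hiff, hL⟩ := ih (fun j h1 h2 => ha j h1 (by omega))
    have hA : 2 ≤ a (n + 1) := ha (n + 1) (by omega) le_rfl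
    set A : ℝ := (a (n + 1) : ℝ) with hAdef
    have hA2 : (2:ℝ) ≤ A := by rw [hAdef]; exact_mod_cast hA
    have hA1 : (0:ℝ) < A - 1 := by linarith
    have hApos : (0:ℝ) < A := by linarith
    have hlc : lc a (n + 1) = lc a n + ll a n / A := rfl
    have hll : ll a (n + 1) = ll a n / (A * (A - 1)) := rfl
    have key : ll a n / A + ll a n / (A * (A - 1)) = ll a n / (A - 1) := by
      field_simp; ring
    have hsub : ll a n / (A - 1) ≤ ll a n := by
      rw [div_le_iff₀ hA1]; nlinarith
    have hdA : ll a n / A > 0 := by positivity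
    have hdA1 : ll a n / (A * (A - 1)) > 0 := by positivity
    refine ⟨by rw [hlc]; linarith, by rw [hll]; exact hdA1, ?_, ?_, ?_⟩
    · rw [hlc, hll]; linarith
    · intro x
      have hsplit : (∀ j ∈ Finset.Icc 1 (n + 1), lurothDigit j x = a j) ↔
          ((∀ j ∈ Finset.Icc 1 n, lurothDigit j x = a j) ∧
            lurothDigit (n + 1) x = a (n + 1)) := by
        constructor
        · intro h
          exact ⟨fun j hj => h j (by simp only [Finset.mem_Icc] at *; omega),
            h (n + 1) (by simp)⟩
        · rintro ⟨h1, h2⟩ j hj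
          simp only [Finset.mem_Icc] at hj
          rcases eq_or_lt_of_le hj.2 with h | h
          · rw [h]; exact h2
          · exact h1 j (by simp only [Finset.mem_Icc]; omega)
      have hdig : lurothDigit (n + 1) x = ⌊1 / lurothL^[n] x⌋.toNat + 1 := by
        simp [lurothDigit]
      constructor
      · rintro ⟨hx01, hdigs⟩
        rw [hsplit] at hdigs
        have hxn : x ∈ Set.Ioc (lc a n) (lc a n + ll a n) :=
          (hiff x).mp ⟨hx01, hdigs.1⟩
        have ht := hL x hxn
        have htpos : 0 < (x - lc a n) / ll a n :=
          div_pos (by linarith [hxn.1]) hl0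
        have h12 := (digit_eq_iff (t := (x - lc a n) / ll a n) htpos hA).mp
          (by rw [← ht, ← hdig]; exact hdigs.2)
        obtain ⟨hgt, hle⟩ := h12
        rw [lt_div_iff₀ hl0] at hgt
        rw [div_le_iff₀ hl0] at hle
        constructor
        · rw [hlc]
          have : 1 / A * ll a n = ll a n / A := by ring
          linarith [this ▸ hgt]
        · rw [hlc, hll]
          have h1 : 1 / (A - 1) * ll a n = ll a n / (A - 1) := by ring
          rw [h1] at hle
          linarith
      · intro hx
        rw [hlc, hll] at hx
        have hxn : x ∈ Set.Ioc (lc a n) (lc a n + ll a n) := by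
          constructor
          · have := hx.1; linarith
          · have := hx.2; linarith
        have hx01 : x ∈ Set.Ioc (0:ℝ) 1 ∧
            ∀ j ∈ Finset.Icc 1 n, lurothDigit j x = a j := (hiff x).mpr hxn
        have ht := hL x hxn
        have htpos : 0 < (x - lc a n) / ll a n :=
          div_pos (by linarith [hxn.1]) hl0
        refine ⟨hx01.1, hsplit.mpr ⟨hx01.2, ?_⟩⟩
        rw [hdig, ht]
        apply (digit_eq_iff htpos hA).mpr
        constructor
        · rw [lt_div_iff₀ hl0]
          have : 1 / A * ll a n = ll a n / A := by ring
          rw [this]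
          linarith [hx.1]
        · rw [div_le_iff₀ hl0]
          have : 1 / (A - 1) * ll a n = ll a n / (A - 1) := by ring
          rw [this]
          linarith [hx.2]
    · intro x hx
      rw [hlc, hll] at hx
      have hxn : x ∈ Set.Ioc (lc a n) (lc a n + ll a n) := by
        constructor
        · have := hx.1; linarith
        · have := hx.2; linarith
      have ht := hL x hxn
      have h1 : 1 / A < (x - lc a n) / ll a n := by
        rw [lt_div_iff₀ hl0]
        have : 1 / A * ll a n = ll a n / A := by ring
        rw [this]; linarith [hx.1]
      have h2 : (x - lc a n) / ll a n ≤ 1 / (A - 1) := by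
        rw [div_le_iff₀ hl0]
        have : 1 / (A - 1) * ll a n = ll a n / (A - 1) := by ring
        rw [this]; linarith [hx.2]
      rw [Function.iterate_succ_apply', ht, lurothL_eq_s18 hA h1 h2]
      rw [hlc, hll]
      field_simp
      ring

lemma J_eq (s a : ℕ → ℕ) (n : ℕ) (hs : 2 ≤ s (n + 1))
    (ha : ∀ j, 1 ≤ j → j ≤ n → 2 ≤ a j) :
    lurothJ s a n
      = Set.Icc (lc a n) (lc a n + ll a n / ((s (n + 1) : ℝ) - 1)) := by
  obtain ⟨hc0, hl0, hcl1, hiff, hL⟩ := main_cyl a n ha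
  have hS2 : (2:ℝ) ≤ (s (n + 1) : ℝ) := by exact_mod_cast hs
  have hS1 : (0:ℝ) < (s (n + 1) : ℝ) - 1 := by linarith
  have hdig : ∀ x : ℝ, lurothDigit (n + 1) x = ⌊1 / lurothL^[n] x⌋.toNat + 1 := by
    intro x; simp [lurothDigit]
  have hU : (⋃ b : ℕ, ⋃ (_ : s (n + 1) ≤ b),
      {x ∈ Set.Ioc (0 : ℝ) 1 |
        (∀ j ∈ Finset.Icc 1 n, lurothDigit j x = a j) ∧ lurothDigit (n + 1) x = b})
      = Set.Ioc (lc a n) (lc a n + ll a n / ((s (n + 1) : ℝ) - 1)) := by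
    ext x
    simp only [Set.mem_iUnion, Set.mem_setOf_eq, Set.mem_sep_iff]
    constructor
    · rintro ⟨b, hb, ⟨hx01, hdigs, hdb⟩⟩
      have hxn : x ∈ Set.Ioc (lc a n) (lc a n + ll a n) := (hiff x).mp ⟨hx01, hdigs⟩
      have ht := hL x hxn
      have htpos : 0 < (x - lc a n) / ll a n := div_pos (by linarith [hxn.1]) hl0
      have hge : s (n + 1) ≤ ⌊1 / lurothL^[n] x⌋.toNat + 1 := by
        rw [← hdig x, hdb]; exact hb
      rw [ht] at hge
      have hge2 := (digit_ge_iff htpos hs).mp hge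
      rw [div_le_iff₀ hl0] at hge2
      refine ⟨hxn.1, ?_⟩
      have : 1 / ((s (n + 1) : ℝ) - 1) * ll a n = ll a n / ((s (n + 1) : ℝ) - 1) := by
        ring
      rw [this] at hge2
      linarith
    · intro hx
      have hsub : ll a n / ((s (n + 1) : ℝ) - 1) ≤ ll a n := by
        rw [div_le_iff₀ hS1]; nlinarith
      have hxn : x ∈ Set.Ioc (lc a n) (lc a n + ll a n) :=
        ⟨hx.1, by linarith [hx.2]⟩
      obtain ⟨hx01, hdigs⟩ := (hiff x).mpr hxn
      have ht := hL x hxn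
      have htpos : 0 < (x - lc a n) / ll a n := div_pos (by linarith [hxn.1]) hl0
      refine ⟨lurothDigit (n + 1) x, ?_, hx01, hdigs, rfl⟩
      rw [hdig x, ht]
      apply (digit_ge_iff htpos hs).mpr
      rw [div_le_iff₀ hl0]
      have : 1 / ((s (n + 1) : ℝ) - 1) * ll a n = ll a n / ((s (n + 1) : ℝ) - 1) := by
        ring
      rw [this]
      linarith [hx.2]
  rw [lurothJ, hU, closure_Ioc]
  have : 0 < ll a n / ((s (n + 1) : ℝ) - 1) := by positivity
  intro h
  nlinarith [h]

lemma lc_ll_congr (a b : ℕ → ℕ) : ∀ m : ℕ, (∀ j, 1 ≤ j → j ≤ m → a j = b j) →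
    lc a m = lc b m ∧ ll a m = ll b m := by
  intro m
  induction m with
  | zero => intro _; simp [lc, ll]
  | succ m ih =>
    intro h
    obtain ⟨h1, h2⟩ := ih (fun j hj1 hj2 => h j hj1 (by omega))
    have h3 : a (m + 1) = b (m + 1) := h (m + 1) (by omega) le_rfl
    constructor
    · show lc a m + ll a m / _ = lc b m + ll b m / _
      rw [h1, h2, h3]
    · show ll a m / _ = ll b m / _
      rw [h2, h3]

/-- If s_k ≥ 4 and the digits satisfy s_j + 1 ≤ a_j, then the gap
inf J_n(a_1,…,a_{n−1},a_n−1) − sup J_n(a_1,…,a_n) equals |J_n(a)|·(s_{n+1}−2),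
which is strictly greater than |J_n(a)|. -/
theorem luroth_gap_between_fundamental_intervals (s : ℕ → ℕ)
    (hs4 : ∀ k, 1 ≤ k → 4 ≤ s k) (a : ℕ → ℕ)
    (ha : ∀ j, 1 ≤ j → s j + 1 ≤ a j) (n : ℕ) (hn : 1 ≤ n) :
    sInf (lurothJ s (Function.update a n (a n - 1)) n) - sSup (lurothJ s a n)
        = Metric.diam (lurothJ s a n) * ((s (n + 1) : ℝ) - 2) ∧
      Metric.diam (lurothJ s a n)
        < Metric.diam (lurothJ s a n) * ((s (n + 1) : ℝ) - 2) := by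
  obtain ⟨m, rfl⟩ : ∃ m, n = m + 1 := ⟨n - 1, by omega⟩
  set a' := Function.update a (m + 1) (a (m + 1) - 1) with ha'def
  have haj : ∀ j, 1 ≤ j → j ≤ m + 1 → 2 ≤ a j := fun j h1 _ => by
    have := ha j h1; have := hs4 j h1; omega
  have ha'eq : ∀ j, j ≤ m → a' j = a j := fun j hj => by
    rw [ha'def, Function.update_of_ne (by omega)]
  have ha'last : a' (m + 1) = a (m + 1) - 1 := by
    rw [ha'def, Function.update_self]
  have ha'j : ∀ j, 1 ≤ j → j ≤ m + 1 → 2 ≤ a' j := fun j h1 h2 => by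
    rcases eq_or_lt_of_le h2 with h | h
    · rw [h, ha'last]; have := ha (m + 1) (by omega); have := hs4 (m + 1) (by omega)
      omega
    · rw [ha'eq j (by omega)]; exact haj j h1 h2
  have hs2 : 2 ≤ s (m + 1 + 1) := by have := hs4 (m + 1 + 1) (by omega); omega
  have hJ := J_eq s a (m + 1) hs2 haj
  have hJ' := J_eq s a' (m + 1) hs2 ha'j
  obtain ⟨hc0, hl0, hcl1, -, -⟩ := main_cyl a (m + 1) haj
  obtain ⟨hc0', hl0', -, -, -⟩ := main_cyl a' (m + 1) ha'j
  obtain ⟨hcm0, hlm0, -, -, -⟩ := main_cyl a m (fun j h1 h2 => haj j h1 (by omega))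
  have hS4 : (4:ℝ) ≤ (s (m + 2) : ℝ) := by exact_mod_cast hs4 (m + 2) (by omega)
  have hS1 : (0:ℝ) < (s (m + 2) : ℝ) - 1 := by linarith
  have hA5 : 5 ≤ a (m + 1) := by
    have := ha (m + 1) (by omega); have := hs4 (m + 1) (by omega); omega
  have hA5' : (5:ℝ) ≤ (a (m + 1) : ℝ) := by exact_mod_cast hA5
  set A : ℝ := (a (m + 1) : ℝ) with hAdef
  set S : ℝ := (s (m + 2) : ℝ) with hSdef
  have hApos : (0:ℝ) < A := by linarith
  have hA1 : (0:ℝ) < A - 1 := by linarith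
  -- congruence for the truncated sequences
  obtain ⟨hlceq, hlleq⟩ := lc_ll_congr a' a m (fun j h1 h2 => ha'eq j h2)
  -- unfold the level m+1 values
  have hlc1 : lc a (m + 1) = lc a m + ll a m / A := rfl
  have hll1 : ll a (m + 1) = ll a m / (A * (A - 1)) := rfl
  have hcast : ((a' (m + 1) : ℕ) : ℝ) = A - 1 := by
    rw [ha'last, hAdef]
    have : 1 ≤ a (m + 1) := by omega
    push_cast [Nat.cast_sub this]
    ring
  have hlc1' : lc a' (m + 1) = lc a m + ll a m / (A - 1) := by
    show lc a' m + ll a' m / ((a' (m + 1) : ℕ) : ℝ) = _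
    rw [hlceq, hlleq, hcast]
  -- compute sInf, sSup, diam
  have hle : lc a (m + 1) ≤ lc a (m + 1) + ll a (m + 1) / (S - 1) := by
    have : 0 < ll a (m + 1) / (S - 1) := by positivity
    linarith
  have hle' : lc a' (m + 1) ≤ lc a' (m + 1) + ll a' (m + 1) / (S - 1) := by
    have : 0 < ll a' (m + 1) / (S - 1) := by positivity
    linarith
  rw [hJ, hJ']
  rw [csInf_Icc hle', csSup_Icc hle, Real.diam_Icc hle]
  have hdiam : lc a (m + 1) + ll a (m + 1) / (S - 1) - lc a (m + 1)
      = ll a (m + 1) / (S - 1) := by ring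
  rw [hdiam, hlc1', hlc1, hll1]
  constructor
  · field_simp
    ring
  · have hD : 0 < ll a m / (A * (A - 1)) / (S - 1) := by positivity
    nlinarith [hD, hS4]
end
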